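/- With V, W, m_NN, Δ_NN as in the NN↔T case of the annular differential (m_NN: V⊗V → W sends v₊⊗v₋ and v₋⊗v₊ to w₋ and the rest to 0; Δ_NN: W → V⊗V sends w₊ to v₊⊗v₋+v₋⊗v₊ and w₋ to 0), both m_NN and Δ_NN are sl2-equivariant, where V carries the defining representation (h·v± = ±v±, e·v₋ = v₊, e·v₊ = 0, f·v₊ = v₋, f·v₋ = 0) and W the trivial representation. -/

import Mathlib

/-- The actions of the `sl2`-basis elements on the defining representation
`V = span{v₊, v₋}` over `ℤ/2` (index `0 ↦ v₊`, `1 ↦ v₋`): `0 ↦ e`, `1 ↦ f`, `2 ↦ h`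
with `h·v± = ±v±`, `e·v₋ = v₊`, `e·v₊ = 0`, `f·v₊ = v₋`, `f·v₋ = 0`. -/
def sl2act (g : Fin 3) (v : Fin 2 → ZMod 2) : Fin 2 → ZMod 2 :=
  match (g : ℕ) with
  | 0 => ![v 1, 0]
  | 1 => ![0, v 0]
  | _ => ![v 0, -v 1]

/-- The diagonal `sl2`-action on `V ⊗ V` (modelled as `Fin 2 × Fin 2 → ZMod 2`):
`x·(a⊗b) = (x·a)⊗b + a⊗(x·b)`. -/
def sl2diag (g : Fin 3) (X : Fin 2 × Fin 2 → ZMod 2) : Fin 2 × Fin 2 → ZMod 2 :=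
  fun p => sl2act g (fun t => X (t, p.2)) p.1 + sl2act g (fun t => X (p.1, t)) p.2

/-- The annular merge `m_NN : V⊗V → W`: `v₊⊗v₋, v₋⊗v₊ ↦ w₋`, rest `↦ 0`. -/
def mNN (X : Fin 2 × Fin 2 → ZMod 2) : Fin 2 → ZMod 2 :=
  ![0, X (0, 1) + X (1, 0)]

/-- The annular split `Δ_NN : W → V⊗V`: `w₊ ↦ v₊⊗v₋ + v₋⊗v₊`, `w₋ ↦ 0`. -/
def deltaNN (w : Fin 2 → ZMod 2) : Fin 2 × Fin 2 → ZMod 2 :=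
  fun p => if p.1 ≠ p.2 then w 0 else 0

/-!
Over any commutative ring, every `2 × 2` matrix `x` satisfies `xᵀ ω + ω x = tr(x) ω` for the
standard symplectic form `ω`, so the traceless matrices `e, f, h` preserve `ω`. In
characteristic two, `m_NN` is the contraction of a tensor with `ω`, and `Δ_NN(w₊)` is the
tensor `ω` itself; equivariance into and out of the trivial representation is exactly this
invariance of `ω`.
-/

open Matrix

section StdSymplectic

variable {R : Type*} [CommRing R]

def stdSymplectic : Matrix (Fin 2) (Fin 2) R := !![0, 1; -1, 0]

theorem trace_stdSymplectic_mul (M : Matrix (Fin 2) (Fin 2) R) :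
    trace (stdSymplectic * M) = M 1 0 - M 0 1 := by
  simp [stdSymplectic, trace_fin_two, vecMul, dotProduct, sub_eq_add_neg]

theorem transpose_mul_stdSymplectic_add (x : Matrix (Fin 2) (Fin 2) R) :
    xᵀ * stdSymplectic + stdSymplectic * x = x.trace • stdSymplectic := by
  ext i j
  fin_cases i <;> fin_cases j <;>
    simp [stdSymplectic, mul_apply, Fin.sum_univ_two, trace_fin_two, vecMul, dotProduct]

theorem mul_stdSymplectic_add_mul_transpose (x : Matrix (Fin 2) (Fin 2) R) :
    x * stdSymplectic + stdSymplectic * xᵀ = x.trace • stdSymplectic := by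
  simpa [trace_transpose] using transpose_mul_stdSymplectic_add xᵀ

theorem trace_stdSymplectic_mul_add_mul_transpose (x M : Matrix (Fin 2) (Fin 2) R) :
    trace (stdSymplectic * (x * M + M * xᵀ)) = x.trace * trace (stdSymplectic * M) := by
  calc trace (stdSymplectic * (x * M + M * xᵀ))
      = trace ((xᵀ * stdSymplectic + stdSymplectic * x) * M) := by
        simp only [Matrix.mul_add, Matrix.add_mul, trace_add, ← Matrix.mul_assoc]
        rw [trace_mul_cycle stdSymplectic M xᵀ, add_comm]
    _ = x.trace * trace (stdSymplectic * M) := by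
        rw [transpose_mul_stdSymplectic_add, smul_mul, trace_smul, smul_eq_mul]

end StdSymplectic

def sl2Matrix (g : Fin 3) : Matrix (Fin 2) (Fin 2) (ZMod 2) :=
  match (g : ℕ) with
  | 0 => !![0, 1; 0, 0]
  | 1 => !![0, 0; 1, 0]
  | _ => !![1, 0; 0, -1]

theorem trace_sl2Matrix (g : Fin 3) : (sl2Matrix g).trace = 0 := by
  fin_cases g <;> decide

theorem sl2act_eq_mulVec (g : Fin 3) (v : Fin 2 → ZMod 2) : sl2act g v = sl2Matrix g *ᵥ v := by
  ext i
  fin_cases g <;> fin_cases i <;> simp [sl2act, sl2Matrix, mulVec, dotProduct]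

def coeffMatrix (X : Fin 2 × Fin 2 → ZMod 2) : Matrix (Fin 2) (Fin 2) (ZMod 2) :=
  of fun i j => X (i, j)

theorem coeffMatrix_injective : Function.Injective coeffMatrix := fun _ _ h =>
  funext fun p => congrFun₂ h p.1 p.2

theorem coeffMatrix_sl2diag (g : Fin 3) (X : Fin 2 × Fin 2 → ZMod 2) :
    coeffMatrix (sl2diag g X) =
      sl2Matrix g * coeffMatrix X + coeffMatrix X * (sl2Matrix g)ᵀ := by
  ext i j
  simp [coeffMatrix, sl2diag, sl2act_eq_mulVec, mul_apply, mulVec, dotProduct, mul_comm]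

theorem mNN_eq_trace_stdSymplectic_mul (X : Fin 2 × Fin 2 → ZMod 2) :
    mNN X = ![0, trace (stdSymplectic * coeffMatrix X)] := by
  rw [trace_stdSymplectic_mul, CharTwo.sub_eq_add, add_comm]
  rfl

theorem coeffMatrix_deltaNN (w : Fin 2 → ZMod 2) :
    coeffMatrix (deltaNN w) = w 0 • stdSymplectic := by
  ext i j
  fin_cases i <;> fin_cases j <;> simp [coeffMatrix, deltaNN, stdSymplectic]

/-- `m_NN` and `Δ_NN` are `sl2`-equivariant, where `V` carries the defining
representation (diagonally on `V ⊗ V`) and `W` the trivial representation: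
`m_NN(x·(a⊗b)) = x·m_NN(a⊗b) = 0` (since `W` is trivial) and
`x·Δ_NN(w) = Δ_NN(x·w) = 0`. -/
theorem mNN_deltaNN_equivariant (g : Fin 3) :
    (∀ X : Fin 2 × Fin 2 → ZMod 2, mNN (sl2diag g X) = 0) ∧
    (∀ (w : Fin 2 → ZMod 2), sl2diag g (deltaNN w) = 0) := by
  refine ⟨fun X => ?_, fun w => coeffMatrix_injective ?_⟩
  · rw [mNN_eq_trace_stdSymplectic_mul, coeffMatrix_sl2diag,
      trace_stdSymplectic_mul_add_mul_transpose, trace_sl2Matrix, zero_mul]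
    simp
  · rw [coeffMatrix_sl2diag, coeffMatrix_deltaNN, Matrix.mul_smul, smul_mul, ← smul_add,
      mul_stdSymplectic_add_mul_transpose, trace_sl2Matrix, zero_smul, smul_zero]
    rfl
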